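/- Let H, H′, O be n×n complex matrices with ‖H‖, ‖H′‖, ‖O‖ finite (operator norm). Define Fₙ via F₀ = O, F_{n+1} = [H, Fₙ]; Gₙ via G₀ = O, G_{n+1} = [H + H′, Gₙ]; and H′ₙ := Σ_{l=1}^{n} ad_H^{l-1}([H′, ad_H^{n-l}(O)]). Then ‖Gₙ - Fₙ - H′ₙ‖ ≤ 2ⁿ ‖O‖ · ((‖H‖ + ‖H′‖)ⁿ - ‖H‖ⁿ - n‖H′‖·‖H‖^{n-1}). -/

import Mathlib

/-!
Set `h = ‖H‖`, `h' = ‖H'‖`. The differences `Dₖ = Gₖ - Fₖ` and `Eₖ = Dₖ - H'ₖ` satisfy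
`Dₖ₊₁ = [H, Dₖ] + [H', Gₖ]` and `Eₖ₊₁ = [H, Eₖ] + [H', Dₖ]`. With `‖[A, B]‖ ≤ 2‖A‖‖B‖`,
induction bounds `‖Gₖ‖`, `‖Dₖ‖`, `‖Eₖ‖` by `2ᵏ‖O‖` times the part of the binomial expansion of
`(h + h')ᵏ` of order at least `0`, `1`, `2` in `h'` respectively.
-/

open Matrix NormedSpace ComplexOrder

noncomputable def opNorm {n : ℕ} (A : Matrix (Fin n) (Fin n) ℂ) : ℝ :=
  ‖(Matrix.toEuclideanCLM (𝕜 := ℂ) A : EuclideanSpace ℂ (Fin n) →L[ℂ] EuclideanSpace ℂ (Fin n))‖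

noncomputable def traceNorm {n : ℕ} (A : Matrix (Fin n) (Fin n) ℂ) : ℝ :=
  (((Matrix.posSemidef_conjTranspose_mul_self A).1.eigenvectorUnitary.1 *
      diagonal (((↑) : ℝ → ℂ) ∘ (√·) ∘ (Matrix.posSemidef_conjTranspose_mul_self A).1.eigenvalues) *
      (star (Matrix.posSemidef_conjTranspose_mul_self A).1.eigenvectorUnitary : Matrix (Fin n) (Fin n) ℂ)).trace).re

def IsDensity {n : ℕ} (ρ : Matrix (Fin n) (Fin n) ℂ) : Prop := ρ.PosSemidef ∧ ρ.trace = 1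

/-- Left adjoint action: ad_H(X) = [H, X]. -/
noncomputable def adL {n : ℕ} (H : Matrix (Fin n) (Fin n) ℂ) : Matrix (Fin n) (Fin n) ℂ → Matrix (Fin n) (Fin n) ℂ :=
  fun X => H * X - X * H

/-- Right-nesting action: X ↦ [X, H]. -/
noncomputable def adR {n : ℕ} (H : Matrix (Fin n) (Fin n) ℂ) : Matrix (Fin n) (Fin n) ℂ → Matrix (Fin n) (Fin n) ℂ :=
  fun X => X * H - H * X

section NestedCommutators

variable {R : Type*} [SeminormedRing R]

theorem norm_lie_le (a x : R) : ‖⁅a, x⁆‖ ≤ 2 * ‖a‖ * ‖x‖ :=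
  calc ‖⁅a, x⁆‖ = ‖a * x - x * a‖ := by rw [Ring.lie_def]
    _ ≤ ‖a * x‖ + ‖x * a‖ := norm_sub_le _ _
    _ ≤ ‖a‖ * ‖x‖ + ‖x‖ * ‖a‖ := add_le_add (norm_mul_le _ _) (norm_mul_le _ _)
    _ = 2 * ‖a‖ * ‖x‖ := by ring

theorem norm_le_of_lie_succ {a : R} {G : ℕ → R} (hG : ∀ k, G (k + 1) = ⁅a, G k⁆) (k : ℕ) :
    ‖G k‖ ≤ (2 * ‖a‖) ^ k * ‖G 0‖ := by
  induction k with
  | zero => simp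
  | succ k ih =>
    calc ‖G (k + 1)‖ ≤ 2 * ‖a‖ * ‖G k‖ := hG k ▸ norm_lie_le a (G k)
      _ ≤ 2 * ‖a‖ * ((2 * ‖a‖) ^ k * ‖G 0‖) := by gcongr
      _ = (2 * ‖a‖) ^ (k + 1) * ‖G 0‖ := by ring

variable {H H' : R} {F G : ℕ → R}

theorem norm_sub_le_of_lie_succ (h0 : F 0 = G 0) (hF : ∀ k, F (k + 1) = ⁅H, F k⁆)
    (hG : ∀ k, G (k + 1) = ⁅H + H', G k⁆) (k : ℕ) :
    ‖G k - F k‖ ≤ 2 ^ k * ‖G 0‖ * ((‖H‖ + ‖H'‖) ^ k - ‖H‖ ^ k) := by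
  induction k with
  | zero => simp [h0]
  | succ k ih =>
    have hD : G (k + 1) - F (k + 1) = ⁅H, G k - F k⁆ + ⁅H', G k⁆ := by
      rw [hG, hF]; simp only [Ring.lie_def]; noncomm_ring
    have hGk : ‖G k‖ ≤ 2 ^ k * ‖G 0‖ * (‖H‖ + ‖H'‖) ^ k :=
      calc ‖G k‖ ≤ (2 * ‖H + H'‖) ^ k * ‖G 0‖ := norm_le_of_lie_succ hG k
        _ ≤ (2 * (‖H‖ + ‖H'‖)) ^ k * ‖G 0‖ := by gcongr; exact norm_add_le H H'
        _ = 2 ^ k * ‖G 0‖ * (‖H‖ + ‖H'‖) ^ k := by rw [mul_pow]; ring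
    calc ‖G (k + 1) - F (k + 1)‖ ≤ 2 * ‖H‖ * ‖G k - F k‖ + 2 * ‖H'‖ * ‖G k‖ := by
          rw [hD]; exact (norm_add_le _ _).trans (add_le_add (norm_lie_le _ _) (norm_lie_le _ _))
      _ ≤ 2 * ‖H‖ * (2 ^ k * ‖G 0‖ * ((‖H‖ + ‖H'‖) ^ k - ‖H‖ ^ k))
          + 2 * ‖H'‖ * (2 ^ k * ‖G 0‖ * (‖H‖ + ‖H'‖) ^ k) := by gcongr
      _ = 2 ^ (k + 1) * ‖G 0‖ * ((‖H‖ + ‖H'‖) ^ (k + 1) - ‖H‖ ^ (k + 1)) := by ring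

theorem norm_sub_sub_le_of_lie_succ {S : ℕ → R} (h0 : F 0 = G 0) (hF : ∀ k, F (k + 1) = ⁅H, F k⁆)
    (hG : ∀ k, G (k + 1) = ⁅H + H', G k⁆) (hS0 : S 0 = 0)
    (hS : ∀ k, S (k + 1) = ⁅H, S k⁆ + ⁅H', F k⁆) (k : ℕ) :
    ‖G k - F k - S k‖ ≤
      2 ^ k * ‖G 0‖ * ((‖H‖ + ‖H'‖) ^ k - ‖H‖ ^ k - k * ‖H'‖ * ‖H‖ ^ (k - 1)) := by
  induction k with
  | zero => simp [h0, hS0]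
  | succ k ih =>
    have hE : G (k + 1) - F (k + 1) - S (k + 1) = ⁅H, G k - F k - S k⁆ + ⁅H', G k - F k⁆ := by
      rw [hG, hF, hS]; simp only [Ring.lie_def]; noncomm_ring
    calc ‖G (k + 1) - F (k + 1) - S (k + 1)‖
        ≤ 2 * ‖H‖ * ‖G k - F k - S k‖ + 2 * ‖H'‖ * ‖G k - F k‖ := by
          rw [hE]; exact (norm_add_le _ _).trans (add_le_add (norm_lie_le _ _) (norm_lie_le _ _))
      _ ≤ 2 * ‖H‖ * (2 ^ k * ‖G 0‖ * ((‖H‖ + ‖H'‖) ^ k - ‖H‖ ^ k - k * ‖H'‖ * ‖H‖ ^ (k - 1)))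
          + 2 * ‖H'‖ * (2 ^ k * ‖G 0‖ * ((‖H‖ + ‖H'‖) ^ k - ‖H‖ ^ k)) := by
          gcongr
          exact norm_sub_le_of_lie_succ h0 hF hG k
      _ = 2 ^ (k + 1) * ‖G 0‖ *
          ((‖H‖ + ‖H'‖) ^ (k + 1) - ‖H‖ ^ (k + 1) - (k + 1 : ℕ) * ‖H'‖ * ‖H‖ ^ k) := by
          rcases k with _ | k
          · simp
          · push_cast; ring

/-- The part of `ad_{H + H'}ᵏ O` that is linear in `H'`. -/
def linearPart (H H' O : R) (k : ℕ) : R :=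
  ∑ l ∈ Finset.range k, (fun x ↦ ⁅H, x⁆)^[l] ⁅H', (fun x ↦ ⁅H, x⁆)^[k - 1 - l] O⁆

theorem linearPart_succ (H H' O : R) (k : ℕ) :
    linearPart H H' O (k + 1) = ⁅H, linearPart H H' O k⁆ + ⁅H', (fun x ↦ ⁅H, x⁆)^[k] O⁆ := by
  have lie_sum (s : Finset ℕ) (f : ℕ → R) : ⁅H, ∑ l ∈ s, f l⁆ = ∑ l ∈ s, ⁅H, f l⁆ := by
    simp only [Ring.lie_def, Finset.mul_sum, Finset.sum_mul, Finset.sum_sub_distrib]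
  rw [linearPart, Finset.sum_range_succ', linearPart, lie_sum]
  congr 1
  refine Finset.sum_congr rfl fun l hl ↦ ?_
  rw [Function.iterate_succ_apply', show k + 1 - 1 - (l + 1) = k - 1 - l by omega]

end NestedCommutators

open scoped Matrix.Norms.L2Operator in
/-- with F₀ = O, F_{k+1} = [H, Fₖ]; G₀ = O, G_{k+1} = [H+H′, Gₖ]; and
H′_N = Σ_{l=1}^{N} ad_H^{l-1}([H′, ad_H^{N-l}(O)]), one has
‖G_N - F_N - H′_N‖ ≤ 2^N ‖O‖ ((‖H‖+‖H′‖)^N - ‖H‖^N - N‖H′‖‖H‖^{N-1}). -/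
theorem stmt11 {n : ℕ} (H H' O : Matrix (Fin n) (Fin n) ℂ) (N : ℕ)
    (F G : ℕ → Matrix (Fin n) (Fin n) ℂ)
    (hF0 : F 0 = O) (hFs : ∀ k, F (k + 1) = H * F k - F k * H)
    (hG0 : G 0 = O) (hGs : ∀ k, G (k + 1) = (H + H') * G k - G k * (H + H')) :
    opNorm (G N - F N -
        ∑ l ∈ Finset.range N,
          (adL H)^[l] (H' * ((adL H)^[N - 1 - l] O) - ((adL H)^[N - 1 - l] O) * H'))
      ≤ 2 ^ N * opNorm O *
          ((opNorm H + opNorm H') ^ N - opNorm H ^ N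
            - N * opNorm H' * opNorm H ^ (N - 1)) := by
  have hF : ∀ k, F k = (fun x ↦ ⁅H, x⁆)^[k] O := by
    intro k
    induction k with
    | zero => exact hF0
    | succ k ih => rw [hFs, ih, Function.iterate_succ_apply']; rfl
  have h0 : F 0 = G 0 := hF0.trans hG0.symm
  have hS (k : ℕ) : linearPart H H' O (k + 1) = ⁅H, linearPart H H' O k⁆ + ⁅H', F k⁆ := by
    rw [hF]; exact linearPart_succ H H' O k
  have key := norm_sub_sub_le_of_lie_succ h0 hFs hGs (Finset.sum_range_zero _) hS N
  rwa [hG0] at key
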